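/- arXiv:1307.5529 — 3 statements merged into one kernel-verified Lean document; each statement's English description precedes it below -/
import Mathlib

section
/- Let R = D[X;σ,δ] be an Ore extension over a division ring D, and suppose R is generated as a module over its center C by finitely many elements c_1, …, c_r. Then for any nonzero f ∈ R, the twosided annihilator Ann_R(R/Rf) equals the intersection of the left ideals Ann_R(c_i + Rf) for i = 1, …, r. In particular, every nonzero polynomial in R is bounded (its bound ideal is nonzero). -/
/-- An Ore extension `R = D[X;σ,δ]`: `R` is a ring containing `D` via `C`, with a
distinguished element `X`, which is a free left `D`-module on the powers of `X`
(encoded by the coefficient equivalence `e`), subject to `X·a = σ(a)·X + δ(a)`,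
where `δ` is a `σ`-derivation. -/
structure OreExt (D : Type*) [DivisionRing D] (σ : D ≃+* D) (δ : D → D)
    (R : Type*) [Ring R] where
  C : D →+* R
  X : R
  e : R ≃+ (ℕ →₀ D)
  e_symm_single : ∀ (n : ℕ) (d : D), e.symm (Finsupp.single n d) = C d * X ^ n
  X_mul_C : ∀ a : D, X * C a = C (σ a) * X + C (δ a)
  δ_add : ∀ a b : D, δ (a + b) = δ a + δ b
  δ_mul : ∀ a b : D, δ (a * b) = σ a * δ b + δ a * b

namespace OreExt

variable {D R : Type*} [DivisionRing D] [Ring R] {σ : D ≃+* D} {δ : D → D}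

/-- Degree, with `deg 0 = ⊥` (i.e. `-∞`). -/
noncomputable def deg (O : OreExt D σ δ R) (f : R) : WithBot ℕ := (O.e f).support.max

/-- Degree as a natural number (`0` for the zero polynomial). -/
noncomputable def ndeg (O : OreExt D σ δ R) (f : R) : ℕ := WithBot.unbotD 0 ((O.e f).support.max)

/-- Leading coefficient. -/
noncomputable def lc (O : OreExt D σ δ R) (f : R) : D := O.e f (O.ndeg f)

/-- `f` is irreducible: it has positive degree and in any factorization one of the two
factors is a constant (an element of `D`). -/
def IrreducibleOre (O : OreExt D σ δ R) (f : R) : Prop :=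
  0 < O.ndeg f ∧ ∀ g h : R, f = g * h → (∃ d : D, g = O.C d) ∨ (∃ d : D, h = O.C d)

end OreExt

/-- A left ideal is twosided. -/
def IsTwoSidedIdeal' {R : Type*} [Ring R] (I : Ideal R) : Prop :=
  ∀ x ∈ I, ∀ r : R, x * r ∈ I

/-- `b` is a bound of `f`: the left ideal `Rb` is twosided and is the largest twosided
ideal contained in `Rf`. -/
def IsBound {R : Type*} [Ring R] (f b : R) : Prop :=
  Ideal.span {b} ≤ Ideal.span {f} ∧ IsTwoSidedIdeal' (Ideal.span {b}) ∧
    ∀ J : Ideal R, IsTwoSidedIdeal' J → J ≤ Ideal.span {f} → J ≤ Ideal.span {b}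

/-!
An element `g` annihilates `R/Rf` as soon as it kills the generators `c i + Rf`, because the
central coefficients of any `x = ∑ z_i c_i` commute past `g`. For a nonzero annihilator, division
with remainder makes `R/Rf` a left `D`-space of dimension `deg f`; the `r * deg f + 1` vectors
`(X^k c_i + Rf)_i` in `(R/Rf)^r` are then linearly dependent over `D`, and a dependence
`∑ d_k (X^k c_i + Rf) = 0` says that `g = ∑ d_k X^k ≠ 0` has every `g c_i ∈ Rf`.
-/

namespace OreExt

variable {D R : Type*} [DivisionRing D] [Ring R] {σ : D ≃+* D} {δ : D → D}
lemma δ_zero (O : OreExt D σ δ R) : δ 0 = 0 := by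
  simpa using (O.δ_add 0 0).symm

variable (O : OreExt D σ δ R)

lemma e_C_mul_X_pow (n : ℕ) (d : D) : O.e (O.C d * O.X ^ n) = Finsupp.single n d := by
  rw [← O.e_symm_single, AddEquiv.apply_symm_apply]

@[elab_as_elim]
lemma induction_on {P : R → Prop} (g : R) (zero : P 0) (add : ∀ a b, P a → P b → P (a + b))
    (monomial : ∀ (n : ℕ) (d : D), P (O.C d * O.X ^ n)) : P g := by
  rw [← O.e.symm_apply_apply g]
  induction O.e g using Finsupp.induction with
  | zero => simpa using zero
  | single_add n d s _ _ ih => rw [map_add, O.e_symm_single]; exact add _ _ (monomial n d) ih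

lemma coeff_C_mul (b : D) (g : R) (k : ℕ) : O.e (O.C b * g) k = b * O.e g k := by
  induction g using O.induction_on with
  | zero => simp
  | add g h hg hh => simp only [mul_add, map_add, Finsupp.add_apply, hg, hh]
  | monomial n d =>
    rw [← mul_assoc, ← map_mul, e_C_mul_X_pow, e_C_mul_X_pow, Finsupp.single_apply,
      Finsupp.single_apply]
    split_ifs <;> simp

lemma coeff_X_mul_succ (g : R) (k : ℕ) :
    O.e (O.X * g) (k + 1) = σ (O.e g k) + δ (O.e g (k + 1)) := by
  induction g using O.induction_on with
  | zero => simp [O.δ_zero]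
  | add g h hg hh => simp only [mul_add, map_add, Finsupp.add_apply, hg, hh, O.δ_add]; abel
  | monomial n d =>
    have hX : O.X * (O.C d * O.X ^ n) = O.C (σ d) * O.X ^ (n + 1) + O.C (δ d) * O.X ^ n := by
      rw [← mul_assoc, O.X_mul_C, add_mul, mul_assoc, ← pow_succ']
    simp only [hX, map_add, Finsupp.add_apply, e_C_mul_X_pow, Finsupp.single_apply]
    split_ifs <;> simp_all [O.δ_zero]

lemma coeff_X_pow_mul (g : R) (t k : ℕ) (h : ∀ j, t < j → O.e g j = 0) :
    (∀ j, t + k < j → O.e (O.X ^ k * g) j = 0) ∧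
      O.e (O.X ^ k * g) (t + k) = σ^[k] (O.e g t) := by
  induction k with
  | zero => simpa using h
  | succ k ih =>
    rw [pow_succ', mul_assoc]
    refine ⟨fun j hj => ?_, ?_⟩
    · obtain ⟨j, rfl⟩ := Nat.exists_eq_add_one_of_ne_zero (by omega : j ≠ 0)
      rw [coeff_X_mul_succ, ih.1 j (by omega), ih.1 (j + 1) (by omega), map_zero, O.δ_zero,
        add_zero]
    · rw [← add_assoc, coeff_X_mul_succ, ih.2, ih.1 _ (by omega), O.δ_zero, add_zero,
        Function.iterate_succ_apply']

lemma lc_ne_zero {f : R} (hf : f ≠ 0) : O.lc f ≠ 0 := by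
  have hne : (O.e f).support.Nonempty := by simpa using hf
  rw [lc, ndeg, ← Finset.coe_max' hne]
  exact Finsupp.mem_support_iff.mp ((O.e f).support.max'_mem hne)

lemma coeff_eq_zero_of_ndeg_lt {f : R} {j : ℕ} (hj : O.ndeg f < j) : O.e f j = 0 := by
  by_contra hfj
  have hne : (O.e f).support.Nonempty := ⟨j, Finsupp.mem_support_iff.mpr hfj⟩
  rw [ndeg, ← Finset.coe_max' hne, WithBot.unbotD_coe] at hj
  exact hj.not_ge (Finset.le_max' _ j (Finsupp.mem_support_iff.mpr hfj))

/-- A left multiple of `f` with prescribed top coefficient `b` in any degree `m ≥ deg f`: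
take `C (b * u⁻¹) * X ^ (m - deg f) * f`, with `u = σ^(m - deg f) (lc f)`. -/
lemma exists_coeff_mul_eq {f : R} (hf : f ≠ 0) {m : ℕ} (hm : O.ndeg f ≤ m) (b : D) :
    ∃ q : R, O.e (q * f) m = b ∧ ∀ j, m < j → O.e (q * f) j = 0 := by
  have hu : σ^[m - O.ndeg f] (O.e f (O.ndeg f)) ≠ 0 :=
    ((σ.injective.iterate _).ne_iff' (iterate_map_zero σ _)).mpr (O.lc_ne_zero hf)
  obtain ⟨htop, hlead⟩ :=
    O.coeff_X_pow_mul f (O.ndeg f) (m - O.ndeg f) fun j => O.coeff_eq_zero_of_ndeg_lt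
  rw [Nat.add_sub_cancel' hm] at htop hlead
  refine ⟨O.C (b * (σ^[m - O.ndeg f] (O.e f (O.ndeg f)))⁻¹) * O.X ^ (m - O.ndeg f), ?_,
    fun j hj => ?_⟩
  · rw [mul_assoc, coeff_C_mul, hlead, mul_assoc, inv_mul_cancel₀ hu, mul_one]
  · rw [mul_assoc, coeff_C_mul, htop j hj, mul_zero]

lemma exists_eq_mul_add {f : R} (hf : f ≠ 0) (g : R) :
    ∃ q ρ : R, g = q * f + ρ ∧ ∀ j, O.ndeg f ≤ j → O.e ρ j = 0 := by
  suffices H : ∀ m (g : R), (∀ j, m ≤ j → O.e g j = 0) →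
      ∃ q ρ : R, g = q * f + ρ ∧ ∀ j, O.ndeg f ≤ j → O.e ρ j = 0 from
    H (O.ndeg g + 1) g fun j hj => O.coeff_eq_zero_of_ndeg_lt (by omega)
  intro m
  induction m with
  | zero => exact fun g hg => ⟨0, g, by simp, fun j _ => hg j j.zero_le⟩
  | succ m ih =>
    intro g hg
    by_cases hmf : m < O.ndeg f
    · exact ⟨0, g, by simp, fun j hj => hg j (by omega)⟩
    obtain ⟨q, hqm, hqtop⟩ := O.exists_coeff_mul_eq hf (not_lt.mp hmf) (O.e g m)
    have hlower : ∀ j, m ≤ j → O.e (g - q * f) j = 0 := by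
      intro j hj
      rw [map_sub, Finsupp.sub_apply]
      rcases hj.eq_or_lt with rfl | hj
      · rw [hqm, sub_self]
      · rw [hg j hj, hqtop j hj, sub_self]
    obtain ⟨q', ρ, hq', hρ⟩ := ih _ hlower
    exact ⟨q' + q, ρ, by rw [add_mul, add_right_comm, ← hq', sub_add_cancel], hρ⟩

lemma coeff_sum_C_mul_X_pow {N : ℕ} (d : Fin N → D) (k : Fin N) :
    O.e (∑ i, O.C (d i) * O.X ^ (i : ℕ)) k = d k := by
  simp only [map_sum, e_C_mul_X_pow, Finsupp.finsetSum_apply, Finsupp.single_apply,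
    Fin.val_inj, Finset.sum_ite_eq', Finset.mem_univ, if_true]

lemma sum_C_mul_eq_zero {ι : Type*} [Fintype ι] {n : ℕ} (d : ι → D) (ρ : ι → R)
    (hρ : ∀ i j, n ≤ j → O.e (ρ i) j = 0) (h : ∀ j < n, ∑ i, d i * O.e (ρ i) j = 0) :
    ∑ i, O.C (d i) * ρ i = 0 := by
  refine O.e.injective (Finsupp.ext fun j => ?_)
  simp only [map_sum, Finsupp.finsetSum_apply, coeff_C_mul, map_zero, Finsupp.coe_zero,
    Pi.zero_apply]
  rcases lt_or_ge j n with hj | hj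
  · exact h j hj
  · simp [hρ _ j hj]

theorem exists_ne_zero_forall_mul_mem_span (O : OreExt D σ δ R) {f : R} (hf : f ≠ 0) {r : ℕ}
    (c : Fin r → R) :
    ∃ g : R, g ≠ 0 ∧ ∀ i, g * c i ∈ Ideal.span {f} := by
  set n := O.ndeg f
  choose q ρ hdiv hρ using fun (k : Fin (r * n + 1)) (i : Fin r) =>
    O.exists_eq_mul_add hf (O.X ^ (k : ℕ) * c i)
  let v : Fin (r * n + 1) → Fin r × Fin n → D := fun k p => O.e (ρ k p.1) p.2
  have hdep : ¬ LinearIndependent D v := fun hli => by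
    simpa using hli.fintype_card_le_finrank
  obtain ⟨d, hd, k, hk⟩ := Fintype.not_linearIndependent_iff.mp hdep
  refine ⟨∑ k, O.C (d k) * O.X ^ (k : ℕ), fun h0 => hk ?_, fun i => ?_⟩
  · simpa [h0] using (O.coeff_sum_C_mul_X_pow d k).symm
  have hrem : ∑ k, O.C (d k) * ρ k i = 0 :=
    O.sum_C_mul_eq_zero d (ρ · i) (fun k => hρ k i) fun j hj => by
      simpa [v, Finset.sum_apply] using congr_fun hd (i, ⟨j, hj⟩)
  have hquot : (∑ k, O.C (d k) * O.X ^ (k : ℕ)) * c i = (∑ k, O.C (d k) * q k i) * f := by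
    simp only [Finset.sum_mul, mul_assoc, hdiv, mul_add, Finset.sum_add_distrib, hrem, add_zero]
  rw [hquot]
  exact Ideal.mul_mem_left _ _ (Ideal.mem_span_singleton_self f)

end OreExt

theorem forall_mul_mem_iff_of_span_center_eq_top {R ι : Type*} [Ring R] {c : ι → R}
    (hgen : Submodule.span (Subring.center R) (Set.range c) = ⊤) (I : Ideal R) (g : R) :
    (∀ x, g * x ∈ I) ↔ ∀ i, g * c i ∈ I := by
  refine ⟨fun h i => h (c i), fun h x => ?_⟩
  have hx : x ∈ Submodule.span (Subring.center R) (Set.range c) := hgen ▸ trivial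
  induction hx using Submodule.span_induction with
  | mem x hx => obtain ⟨i, rfl⟩ := hx; exact h i
  | zero => simp
  | add x y _ _ hx hy => rw [mul_add]; exact I.add_mem hx hy
  | smul z x _ hx =>
    rw [Subring.smul_def, smul_eq_mul, ← mul_assoc, Subring.mem_center_iff.mp z.2 g, mul_assoc]
    exact I.mul_mem_left _ hx

/-- if `R` is generated as a module over its center by `c 1, …, c r`,
then for nonzero `f` the two-sided annihilator of `R/Rf` is the intersection of the
annihilators of the `c i + Rf`, and it is nonzero (every nonzero polynomial is
bounded). -/
theorem bound_eq_inter_annihilators {D R : Type*} [DivisionRing D] [Ring R]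
    (σ : D ≃+* D) (δ : D → D) (O : OreExt D σ δ R) (r : ℕ) (c : Fin r → R)
    (hgen : Submodule.span (Subring.center R) (Set.range c) = ⊤)
    (f : R) (hf : f ≠ 0) :
    {g : R | ∀ x : R, g * x ∈ Ideal.span {f}} =
        ⋂ i, {g : R | g * c i ∈ Ideal.span {f}} ∧
      ∃ g : R, g ≠ 0 ∧ ∀ x : R, g * x ∈ Ideal.span {f} := by
  have hann : ∀ g, (∀ x, g * x ∈ Ideal.span {f}) ↔ ∀ i, g * c i ∈ Ideal.span {f} :=
    forall_mul_mem_iff_of_span_center_eq_top hgen _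
  obtain ⟨g, hg0, hg⟩ := O.exists_ne_zero_forall_mul_mem_span hf c
  exact ⟨Set.ext fun g => by simpa using hann g, g, hg0, (hann g).mpr hg⟩
end

section
/- Let R = D[X;σ,δ] be an Ore extension over a division ring D, generated as an algebra over its center by elements d_1, …, d_s. For a nonzero f ∈ R, the left ideal Rf is twosided (i.e., Rf equals Rf*, the bound ideal) if and only if the left remainder of f·d_i upon division by f is zero for every 1 ≤ i ≤ s. -/
/-! `R f` is twosided iff `f r ∈ R f` for all `r`. The `r` with this property form a subalgebra
over the center (the idealizer of `R f`), so it suffices to test the generators; and the left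
remainder of `f dᵢ` by `f` vanishes exactly when `f dᵢ ∈ R f`. -/

theorem isTwoSidedIdeal'_span_singleton_iff {R : Type*} [Ring R] (f : R) :
    IsTwoSidedIdeal' (Ideal.span {f} : Ideal R) ↔ ∀ r : R, f * r ∈ Ideal.span {f} := by
  refine ⟨fun h r => h f (Ideal.mem_span_singleton_self f) r, fun h x hx r => ?_⟩
  obtain ⟨a, rfl⟩ := Ideal.mem_span_singleton'.1 hx
  rw [mul_assoc]
  exact Ideal.mul_mem_left _ a (h r)

def spanSingletonIdealizer (S : Type*) {R : Type*} [CommSemiring S] [Ring R] [Algebra S R]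
    (f : R) : Subalgebra S R where
  carrier := {r | f * r ∈ Ideal.span {f}}
  mul_mem' {a b} ha hb := by
    obtain ⟨q, hq⟩ := Ideal.mem_span_singleton'.1 ha
    change f * (a * b) ∈ (Ideal.span {f} : Ideal R)
    rw [← mul_assoc, ← hq, mul_assoc]
    exact Ideal.mul_mem_left _ q hb
  add_mem' {a b} ha hb := by
    change f * (a + b) ∈ (Ideal.span {f} : Ideal R)
    rw [mul_add]
    exact add_mem ha hb
  algebraMap_mem' c := by
    change f * algebraMap S R c ∈ (Ideal.span {f} : Ideal R)
    rw [← Algebra.commutes]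
    exact Ideal.mul_mem_left _ _ (Ideal.mem_span_singleton_self f)

theorem isTwoSidedIdeal'_span_singleton_iff_of_adjoin_eq_top {S R : Type*} [CommSemiring S]
    [Ring R] [Algebra S R] {G : Set R} (hG : Algebra.adjoin S G = ⊤) (f : R) :
    IsTwoSidedIdeal' (Ideal.span {f} : Ideal R) ↔ ∀ g ∈ G, f * g ∈ Ideal.span {f} := by
  rw [isTwoSidedIdeal'_span_singleton_iff]
  refine ⟨fun h g _ => h g, fun h r => ?_⟩
  have hle : Algebra.adjoin S G ≤ spanSingletonIdealizer S f := Algebra.adjoin_le h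
  exact hle (hG ▸ Algebra.mem_top)

theorem span_twosided_iff_rem_zero_general {R : Type*} [Ring R]
    (s : ℕ) (d : Fin s → R)
    (hgen : Algebra.adjoin (Subring.center R) (Set.range d) = ⊤)
    (f : R) :
    IsTwoSidedIdeal' (Ideal.span {f} : Ideal R) ↔ ∀ i, ∃ q : R, f * d i = q * f := by
  rw [isTwoSidedIdeal'_span_singleton_iff_of_adjoin_eq_top hgen, Set.forall_mem_range]
  simp only [Ideal.mem_span_singleton', eq_comm]

/-- if `R` is generated as an algebra over its center by `d 1, …, d s`,
then for nonzero `f` the left ideal `Rf` is twosided (i.e. `Rf = Rf*`) iff for every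
`i` the left remainder of `f·dᵢ` upon division by `f` is zero, i.e. `f·dᵢ = q·f` for
some `q`. -/
theorem span_twosided_iff_rem_zero {D R : Type*} [DivisionRing D] [Ring R]
    (σ : D ≃+* D) (δ : D → D) (O : OreExt D σ δ R) (s : ℕ) (d : Fin s → R)
    (hgen : Algebra.adjoin (Subring.center R) (Set.range d) = ⊤)
    (f : R) (hf : f ≠ 0) :
    IsTwoSidedIdeal' (Ideal.span {f} : Ideal R) ↔ ∀ i, ∃ q : R, f * d i = q * f :=
  span_twosided_iff_rem_zero_general s d hgen f
end

section
/- Let R = D[X;σ,δ] be an Ore extension over a division ring D generated as an algebra over its center by d_1, …, d_s, and let f ∈ R be nonzero. If the left remainder of f·d_{i0} by f is nonzero for some i0, and f_{d_{i0}} generates Ann_R(d_{i0} + Rf), then the bound of the left least common multiple m = [f_{d_{i0}}, f]_ℓ generates the same twosided ideal as the bound of f (i.e., R f* = R m*), and Rm is strictly contained in Rf. -/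
/-!
Since `R f*` is twosided, `f* d ∈ R f* ⊆ R f`, so `f*` lies in `Ann_R(d + Rf) = R f_d` as well
as in `R f`, hence in `R m`; maximality of `m*` gives `f* ∈ R m*`, while `R m ⊆ R f` gives
`m* ∈ R f*`. If `R m = R f`, then `f ∈ R f_d`, i.e. `f d ∈ R f`.
-/

namespace IsBound

variable {R : Type*} [Ring R] {f b : R}

theorem span_le_of_annihilator (hb : IsBound f b) {a g : R}
    (hg : ∀ x : R, x ∈ Ideal.span {g} ↔ x * a ∈ Ideal.span {f}) :
    Ideal.span {b} ≤ Ideal.span {g} :=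
  fun x hx => (hg x).2 (hb.1 (hb.2.1 x hx a))

theorem span_le_of_span_le {g c : R} (hc : IsBound g c) (hb : IsBound f b)
    (h : Ideal.span {b} ≤ Ideal.span {g}) : Ideal.span {b} ≤ Ideal.span {c} :=
  hc.2.2 _ hb.2.1 h

end IsBound

theorem bound_step_general {R : Type*} [Ring R]
    (s : ℕ) (d : Fin s → R)
    (f : R) (i0 : Fin s)
    (hrem : f * d i0 ∉ Ideal.span {f})
    (fd : R) (hfd : ∀ g : R, g ∈ Ideal.span {fd} ↔ g * d i0 ∈ Ideal.span {f})
    (m : R) (hm : Ideal.span {m} = Ideal.span {fd} ⊓ Ideal.span {f})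
    (bf bm : R) (hbf : IsBound f bf) (hbm : IsBound m bm) :
    Ideal.span {bf} = Ideal.span {bm} ∧
      (Ideal.span {m} : Ideal R) < Ideal.span {f} := by
  have hmf : Ideal.span {m} ≤ Ideal.span {f} := hm ▸ inf_le_right
  have hbf_m : Ideal.span {bf} ≤ Ideal.span {m} :=
    hm ▸ le_inf (hbf.span_le_of_annihilator hfd) hbf.1
  refine ⟨le_antisymm (hbm.span_le_of_span_le hbf hbf_m)
    (hbf.span_le_of_span_le hbm (hbm.1.trans hmf)), hmf.lt_of_ne fun h => hrem ?_⟩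
  have hf_mem : f ∈ Ideal.span {fd} ⊓ Ideal.span {f} :=
    hm ▸ h ▸ Ideal.mem_span_singleton_self f
  exact (hfd f).1 hf_mem.1

/-- if the left remainder of `f·d_{i₀}` by `f` is nonzero, `f_{d_{i₀}}`
generates the annihilator of `d_{i₀} + Rf`, and `m = [f_{d_{i₀}}, f]_ℓ`, then the
bound of `m` generates the same twosided ideal as the bound of `f`, and
`Rm ⊊ Rf`. -/
theorem bound_step {D R : Type*} [DivisionRing D] [Ring R]
    (σ : D ≃+* D) (δ : D → D) (O : OreExt D σ δ R) (s : ℕ) (d : Fin s → R)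
    (hgen : Algebra.adjoin (Subring.center R) (Set.range d) = ⊤)
    (f : R) (hf : f ≠ 0) (i0 : Fin s)
    (hrem : f * d i0 ∉ Ideal.span {f})
    (fd : R) (hfd : ∀ g : R, g ∈ Ideal.span {fd} ↔ g * d i0 ∈ Ideal.span {f})
    (m : R) (hm : Ideal.span {m} = Ideal.span {fd} ⊓ Ideal.span {f})
    (bf bm : R) (hbf : IsBound f bf) (hbm : IsBound m bm) :
    Ideal.span {bf} = Ideal.span {bm} ∧
      (Ideal.span {m} : Ideal R) < Ideal.span {f} :=
  bound_step_general s d f i0 hrem fd hfd m hm bf bm hbf hbm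
end
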